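/- The ZX construction of the Pauli-Y spider is correct for every arity: for all m ≥ 1, as linear maps (ℂ²)^{⊗m} → ℂ², M_X^{(m)} ∘ CZ_m = Σ_{j∈{0,1}} y_j · ⟨y_j^{⊗m}, ·⟩, i.e. the m-ary X-multiplication precomposed with controlled-Z gates on all pairs of factors equals the m-ary multiplication of the Pauli-Y eigenbasis. Equivalently, for every f : {0,…,m−1} → {0,1} with c₁(f) := #{i : f(i) = 1}, (M_X^{(m)} ∘ CZ_m)(e_f) = 2^{−(m−1)/2} · (−1)^{⌊c₁(f)/2⌋} · e_{c₁(f) mod 2}. -/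

import Mathlib

noncomputable section

/-- The qubit space ℂ², modeled as functions `Fin 2 → ℂ`. -/
abbrev Qubit : Type := Fin 2 → ℂ

/-- The two-qubit space ℂ² ⊗ ℂ², modeled as `Fin 2 × Fin 2 → ℂ`. -/
abbrev Q2 : Type := Fin 2 × Fin 2 → ℂ

/-- The standard basis e₀, e₁ of ℂ². -/
def ket (j : Fin 2) : Qubit := fun k => if k = j then 1 else 0

/-- √2 as a complex number. -/
def s2 : ℂ := Real.sqrt 2

/-- The Pauli-X eigenbasis x_j = (e₀ + (−1)^j e₁)/√2. -/
def xb (j : Fin 2) : Qubit := s2⁻¹ • (ket 0 + ((-1 : ℂ) ^ (j : ℕ)) • ket 1)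

/-- The Pauli-Y eigenbasis y_j = (e₀ + (−1)^j i e₁)/√2. -/
def yb (j : Fin 2) : Qubit := s2⁻¹ • (ket 0 + ((-1 : ℂ) ^ (j : ℕ) * Complex.I) • ket 1)

/-- Inner product on ℂ², conjugate-linear in the first argument. -/
def inp (v w : Qubit) : ℂ := ∑ k : Fin 2, starRingEnd ℂ (v k) * w k

/-- Tensor product of two qubit vectors. -/
def tp (v w : Qubit) : Q2 := fun p => v p.1 * w p.2

/-- Inner product on ℂ² ⊗ ℂ², conjugate-linear in the first argument. -/
def inp2 (v w : Q2) : ℂ := ∑ p : Fin 2 × Fin 2, starRingEnd ℂ (v p) * w p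

/-- The copy map δ_b of an orthonormal basis b: v ↦ Σ_j ⟨b_j, v⟩ (b_j ⊗ b_j). -/
def copyM (b : Fin 2 → Qubit) (v : Qubit) : Q2 :=
  fun p => ∑ j : Fin 2, inp (b j) v * (b j p.1 * b j p.2)

/-- The multiplication m_b of an orthonormal basis b (the adjoint of δ_b):
    w ↦ Σ_j ⟨b_j ⊗ b_j, w⟩ b_j. -/
def multM (b : Fin 2 → Qubit) (w : Q2) : Qubit :=
  fun k => ∑ j : Fin 2, inp2 (tp (b j) (b j)) w * b j k

/-- The N-qubit space (ℂ²)^{⊗m}, modeled as `(Fin m → Fin 2) → ℂ`. -/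
abbrev QN (m : ℕ) : Type := (Fin m → Fin 2) → ℂ

/-- Inner product on (ℂ²)^{⊗m}, conjugate-linear in the first argument. -/
def innerN {m : ℕ} (v w : QN m) : ℂ := ∑ f : Fin m → Fin 2, starRingEnd ℂ (v f) * w f

/-- The m-fold tensor power x_j^{⊗m} of the Pauli-X eigenvector x_j. -/
def xpow (m : ℕ) (j : Fin 2) : QN m := fun f => ∏ i : Fin m, xb j (f i)

/-- The m-ary X-multiplication M_X^{(m)} : (ℂ²)^{⊗m} → ℂ²,
w ↦ Σ_j ⟨x_j^{⊗m}, w⟩ x_j. -/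
def MX (m : ℕ) (w : QN m) : Qubit := fun k => ∑ j : Fin 2, innerN (xpow m j) w * xb j k

/-- The number of ones c₁(f) of a bit string f. -/
def c1 {m : ℕ} (f : Fin m → Fin 2) : ℕ := (Finset.univ.filter (fun i => f i = 1)).card

/-- The number of (unordered) pairs of positions both carrying a one. -/
def pairCount {m : ℕ} (f : Fin m → Fin 2) : ℕ :=
  (Finset.univ.filter (fun p : Fin m × Fin m => p.1 < p.2 ∧ f p.1 = 1 ∧ f p.2 = 1)).card

/-- CZ_m, the composition of controlled-Z gates on all pairs of tensor factors:
it acts diagonally by CZ_m(e_f) = (−1)^{#{(i,i') : i<i', f i = f i' = 1}} e_f. -/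
def CZm (m : ℕ) (w : QN m) : QN m := fun f => (-1 : ℂ) ^ pairCount f * w f

/-- The standard basis vector e_f = e_{f 0} ⊗ ⋯ ⊗ e_{f (m−1)} of (ℂ²)^{⊗m}. -/
def indN {m : ℕ} (f : Fin m → Fin 2) : QN m := fun g => if g = f then 1 else 0

/-- The m-fold tensor power y_j^{⊗m} of the Pauli-Y eigenvector y_j. -/
def ypow (m : ℕ) (j : Fin 2) : QN m := fun f => ∏ i : Fin m, yb j (f i)


section Aux

open Fin.NatCast

lemma s2_mul_self : s2 * s2 = 2 := by
  have : (0:ℝ) ≤ 2 := by norm_num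
  simp [s2, ← Complex.ofReal_mul, Real.mul_self_sqrt this]

lemma s2_key (m : ℕ) (hm : 1 ≤ m) : s2⁻¹ ^ m * s2⁻¹ * 2 = s2⁻¹ ^ (m - 1) := by
  obtain ⟨n, rfl⟩ : ∃ n, m = n + 1 := ⟨m - 1, (Nat.succ_pred_eq_of_pos hm).symm⟩
  have h1 : s2⁻¹ * s2⁻¹ * 2 = 1 := by
    rw [← mul_inv, s2_mul_self]
    norm_num
  simp only [pow_succ, Nat.add_sub_cancel]
  calc s2⁻¹ ^ n * s2⁻¹ * s2⁻¹ * 2 = s2⁻¹ ^ n * (s2⁻¹ * s2⁻¹ * 2) := by ring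
    _ = s2⁻¹ ^ n := by rw [h1, mul_one]

lemma conj_s2inv : starRingEnd ℂ s2⁻¹ = s2⁻¹ := by
  simp [s2]

lemma xb_apply (j k : Fin 2) : xb j k = s2⁻¹ * (-1 : ℂ) ^ ((j : ℕ) * (k : ℕ)) := by
  fin_cases j <;> fin_cases k <;> simp [xb, ket]

lemma yb_apply (j k : Fin 2) :
    yb j k = s2⁻¹ * ((-1 : ℂ) ^ (j : ℕ) * Complex.I) ^ (k : ℕ) := by
  fin_cases j <;> fin_cases k <;> simp [yb, ket]

lemma sum_val {m : ℕ} (f : Fin m → Fin 2) : (∑ i, ((f i : ℕ))) = c1 f := by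
  unfold c1
  rw [Finset.card_filter]
  refine Finset.sum_congr rfl fun i _ => ?_
  have h := (f i).is_lt
  by_cases h1 : f i = 1
  · simp [h1]
  · have : (f i : ℕ) ≠ 1 := fun hc => h1 (Fin.ext hc)
    have : (f i : ℕ) = 0 := by omega
    simp [h1, this]

lemma xpow_apply {m : ℕ} (j : Fin 2) (f : Fin m → Fin 2) :
    xpow m j f = s2⁻¹ ^ m * (-1 : ℂ) ^ ((j : ℕ) * c1 f) := by
  unfold xpow
  calc (∏ i : Fin m, xb j (f i))
      = ∏ i : Fin m, s2⁻¹ * (-1 : ℂ) ^ ((j : ℕ) * (f i : ℕ)) := by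
        exact Finset.prod_congr rfl fun i _ => xb_apply j (f i)
    _ = s2⁻¹ ^ m * (-1 : ℂ) ^ ((j : ℕ) * c1 f) := by
        rw [Finset.prod_mul_distrib, Finset.prod_const, Finset.prod_pow_eq_pow_sum,
          ← Finset.mul_sum, sum_val]
        simp

lemma ypow_apply {m : ℕ} (j : Fin 2) (f : Fin m → Fin 2) :
    ypow m j f = s2⁻¹ ^ m * ((-1 : ℂ) ^ (j : ℕ) * Complex.I) ^ (c1 f) := by
  unfold ypow
  calc (∏ i : Fin m, yb j (f i))
      = ∏ i : Fin m, s2⁻¹ * ((-1 : ℂ) ^ (j : ℕ) * Complex.I) ^ (f i : ℕ) := by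
        exact Finset.prod_congr rfl fun i _ => yb_apply j (f i)
    _ = _ := by
        rw [Finset.prod_mul_distrib, Finset.prod_const, Finset.prod_pow_eq_pow_sum, sum_val]
        simp

lemma two_mul_pairCount {m : ℕ} (f : Fin m → Fin 2) :
    2 * pairCount f = c1 f * (c1 f - 1) := by
  classical
  set S : Finset (Fin m) := Finset.univ.filter (fun i => f i = 1) with hS
  set T : Finset (Fin m × Fin m) :=
    Finset.univ.filter (fun p : Fin m × Fin m => p.1 < p.2 ∧ f p.1 = 1 ∧ f p.2 = 1) with hT
  set U : Finset (Fin m × Fin m) :=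
    Finset.univ.filter (fun p : Fin m × Fin m => p.2 < p.1 ∧ f p.1 = 1 ∧ f p.2 = 1) with hU
  have hcard : U.card = T.card := by
    refine Finset.card_bij' (fun p _ => p.swap) (fun p _ => p.swap) ?_ ?_ ?_ ?_ <;>
      intro p hp <;>
      simp only [hU, hT, Finset.mem_filter, Finset.mem_univ, true_and, Prod.fst_swap,
        Prod.snd_swap, Prod.swap_swap] at hp ⊢ <;>
      tauto
  have hdisj : Disjoint T U := by
    rw [Finset.disjoint_left]
    intro p hpT hpU
    simp only [hT, hU, Finset.mem_filter] at hpT hpU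
    exact absurd hpU.2.1 (not_lt.mpr hpT.2.1.le)
  have hunion : T ∪ U = S.offDiag := by
    ext p
    simp only [hT, hU, hS, Finset.mem_union, Finset.mem_filter, Finset.mem_offDiag,
      Finset.mem_univ, true_and]
    constructor
    · rintro (⟨h1, h2, h3⟩ | ⟨h1, h2, h3⟩)
      · exact ⟨h2, h3, h1.ne⟩
      · exact ⟨h2, h3, h1.ne'⟩
    · rintro ⟨h1, h2, h3⟩
      rcases lt_or_gt_of_ne h3 with h | h
      · exact Or.inl ⟨h, h1, h2⟩
      · exact Or.inr ⟨h, h1, h2⟩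
  have := Finset.card_union_of_disjoint hdisj
  rw [hunion, Finset.offDiag_card, hcard] at this
  have hc1 : c1 f = S.card := rfl
  have hpc : pairCount f = T.card := rfl
  rw [hc1, hpc]
  rcases hn : S.card with _ | n
  · rw [hn] at this; omega
  · rw [hn] at this
    have hmul : (n + 1) * (n + 1) = (n + 1) * n + (n + 1) := by ring
    have hsub : n + 1 - 1 = n := rfl
    rw [hsub]
    omega

lemma neg_one_pow_choose2 (c : ℕ) : (-1 : ℂ) ^ (c.choose 2) = (-1 : ℂ) ^ (c / 2) := by
  induction c using Nat.twoStepInduction with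
  | zero => rfl
  | one => rfl
  | more c ih _ =>
    have h : (c + 2).choose 2 = c.choose 2 + (2 * c + 1) := by
      simp [Nat.choose_succ_succ, Nat.choose_one_right]
      ring
    have h2 : (c + 2) / 2 = c / 2 + 1 := by omega
    have h4 : (-1 : ℂ) ^ (2 * c) = 1 := by
      rw [pow_mul]; norm_num
    rw [h, h2, pow_add, pow_add, ih, pow_add, h4]
    ring

lemma pairCount_parity {m : ℕ} (f : Fin m → Fin 2) :
    (-1 : ℂ) ^ pairCount f = (-1 : ℂ) ^ (c1 f / 2) := by
  have h1 := two_mul_pairCount f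
  have h2 : pairCount f = (c1 f).choose 2 := by
    have := Nat.choose_two_right (c1 f)
    omega
  rw [h2, neg_one_pow_choose2]

lemma conj_xpow {m : ℕ} (j : Fin 2) (f : Fin m → Fin 2) :
    starRingEnd ℂ (xpow m j f) = s2⁻¹ ^ m * (-1 : ℂ) ^ ((j : ℕ) * c1 f) := by
  rw [xpow_apply, map_mul, map_pow, map_pow, conj_s2inv, map_neg, map_one]

lemma conj_ypow {m : ℕ} (j : Fin 2) (f : Fin m → Fin 2) :
    starRingEnd ℂ (ypow m j f)
      = s2⁻¹ ^ m * ((-1 : ℂ) ^ (j : ℕ) * (-Complex.I)) ^ (c1 f) := by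
  rw [ypow_apply, map_mul, map_pow, map_pow, conj_s2inv, map_mul, map_pow, map_neg, map_one,
    Complex.conj_I]

lemma keyX {m : ℕ} (hm : 1 ≤ m) (f : Fin m → Fin 2) (k : Fin 2) :
    ∑ j : Fin 2, (starRingEnd ℂ (xpow m j f) * (-1 : ℂ) ^ pairCount f) * xb j k
      = (s2⁻¹ ^ (m - 1) * (-1 : ℂ) ^ (c1 f / 2)) * ket ((c1 f : ℕ) : Fin 2) k := by
  have hs := s2_key m hm
  rw [Fin.sum_univ_two]
  simp only [conj_xpow, xb_apply, pairCount_parity, ket, Fin.val_zero, Fin.val_one,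
    Nat.zero_mul, Nat.one_mul, pow_zero, mul_one, one_mul]
  rcases Nat.even_or_odd (c1 f) with ⟨t, ht⟩ | ⟨t, ht⟩
  · have hc : ((c1 f : ℕ) : Fin 2) = 0 := by
      rw [Fin.natCast_eq_zero]; omega
    have he : (-1 : ℂ) ^ (c1 f) = 1 := Even.neg_one_pow ⟨t, ht⟩
    rw [hc, he]
    fin_cases k <;> simp only [Fin.mk_zero, Fin.mk_one]
    · rw [if_pos trivial]
      simp only [Fin.val_zero, pow_zero, mul_one]
      linear_combination ((-1 : ℂ)) ^ (c1 f / 2) * hs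
    · rw [if_neg (by decide)]
      simp only [Fin.val_one, pow_one]
      ring
  · have hc : ((c1 f : ℕ) : Fin 2) = 1 := by
      have : c1 f % 2 = 1 := by omega
      rw [← Nat.div_add_mod (c1 f) 2, this]
      push_cast
      simp [Fin.natCast_eq_zero]
    have he : (-1 : ℂ) ^ (c1 f) = -1 := Odd.neg_one_pow ⟨t, ht⟩
    rw [hc, he]
    fin_cases k <;> simp only [Fin.mk_zero, Fin.mk_one]
    · rw [if_neg (by decide)]
      simp only [Fin.val_zero, pow_zero, mul_one]
      ring
    · rw [if_pos trivial]
      simp only [Fin.val_one, pow_one]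
      linear_combination ((-1 : ℂ)) ^ (c1 f / 2) * hs

lemma keyY {m : ℕ} (hm : 1 ≤ m) (f : Fin m → Fin 2) (k : Fin 2) :
    ∑ j : Fin 2, starRingEnd ℂ (ypow m j f) * yb j k
      = (s2⁻¹ ^ (m - 1) * (-1 : ℂ) ^ (c1 f / 2)) * ket ((c1 f : ℕ) : Fin 2) k := by
  have hs := s2_key m hm
  rw [Fin.sum_univ_two]
  simp only [conj_ypow, yb_apply, ket, Fin.val_zero, Fin.val_one, pow_zero, pow_one,
    mul_one, one_mul, neg_one_mul, neg_neg]
  rcases Nat.even_or_odd (c1 f) with ⟨t, ht⟩ | ⟨t, ht⟩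
  · have hc : ((c1 f : ℕ) : Fin 2) = 0 := by
      rw [Fin.natCast_eq_zero]; omega
    have ht2 : c1 f = 2 * t := by omega
    have hdiv : c1 f / 2 = t := by omega
    have hI : (-Complex.I) ^ (c1 f) = (-1 : ℂ) ^ t := by
      rw [ht2, pow_mul]
      norm_num [Complex.I_sq]
    have hI2 : (Complex.I) ^ (c1 f) = (-1 : ℂ) ^ t := by
      rw [ht2, pow_mul, Complex.I_sq]
    rw [hc, hdiv, hI, hI2]
    fin_cases k <;> simp only [Fin.mk_zero, Fin.mk_one]
    · rw [if_pos trivial]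
      simp only [Fin.val_zero, pow_zero, mul_one]
      linear_combination ((-1 : ℂ)) ^ t * hs
    · rw [if_neg (by decide)]
      simp only [Fin.val_one, pow_one]
      ring
  · have hc : ((c1 f : ℕ) : Fin 2) = 1 := by
      have h1 : c1 f % 2 = 1 := by omega
      rw [← Nat.div_add_mod (c1 f) 2, h1]
      push_cast
      simp [Fin.natCast_eq_zero]
    have ht2 : c1 f = 2 * t + 1 := ht
    have hdiv : c1 f / 2 = t := by omega
    have hI : (-Complex.I) ^ (c1 f) = (-1 : ℂ) ^ t * (-Complex.I) := by
      rw [ht2, pow_succ, pow_mul]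
      norm_num [Complex.I_sq]
    have hI2 : (Complex.I) ^ (c1 f) = (-1 : ℂ) ^ t * Complex.I := by
      rw [ht2, pow_succ, pow_mul, Complex.I_sq]
    rw [hc, hdiv, hI, hI2]
    fin_cases k <;> simp only [Fin.mk_zero, Fin.mk_one]
    · rw [if_neg (by decide)]
      simp only [Fin.val_zero, pow_zero, mul_one]
      ring
    · rw [if_pos trivial]
      simp only [Fin.val_one, pow_one]
      have hI_sq := Complex.I_sq
      linear_combination ((-1 : ℂ)) ^ t * hs
        - (s2⁻¹ ^ m * s2⁻¹ * 2 * (-1 : ℂ) ^ t) * Complex.I_sq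

lemma keyXY {m : ℕ} (hm : 1 ≤ m) (f : Fin m → Fin 2) (k : Fin 2) :
    ∑ j : Fin 2, (starRingEnd ℂ (xpow m j f) * (-1 : ℂ) ^ pairCount f) * xb j k
      = ∑ j : Fin 2, starRingEnd ℂ (ypow m j f) * yb j k :=
  (keyX hm f k).trans (keyY hm f k).symm

end Aux

/-- the ZX construction of the Pauli-Y spider is correct for every
arity m ≥ 1: M_X^{(m)} ∘ CZ_m = Σ_j y_j ⟨y_j^{⊗m}, ·⟩; equivalently, on each
basis vector e_f, (M_X^{(m)} ∘ CZ_m)(e_f) = 2^{−(m−1)/2} (−1)^{⌊c₁(f)/2⌋} e_{c₁(f) mod 2}. -/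
theorem Y_spider_from_ZX (m : ℕ) (hm : 1 ≤ m) :
    (∀ w : QN m, MX m (CZm m w) = fun k => ∑ j : Fin 2, innerN (ypow m j) w * yb j k) ∧
    (∀ f : Fin m → Fin 2,
      MX m (CZm m (indN f)) =
        (s2⁻¹ ^ (m - 1) * (-1 : ℂ) ^ (c1 f / 2)) • ket (Fin.ofNat 2 (c1 f : ℕ))) := by
  constructor
  · intro w
    funext k
    show (∑ j : Fin 2, innerN (xpow m j) (CZm m w) * xb j k)
        = ∑ j : Fin 2, innerN (ypow m j) w * yb j k
    have hL : ∀ j : Fin 2, innerN (xpow m j) (CZm m w) * xb j k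
        = ∑ g : Fin m → Fin 2,
            ((starRingEnd ℂ (xpow m j g) * (-1 : ℂ) ^ pairCount g) * xb j k) * w g := by
      intro j
      unfold innerN CZm
      rw [Finset.sum_mul]
      exact Finset.sum_congr rfl fun g _ => by ring
    have hR : ∀ j : Fin 2, innerN (ypow m j) w * yb j k
        = ∑ g : Fin m → Fin 2, (starRingEnd ℂ (ypow m j g) * yb j k) * w g := by
      intro j
      unfold innerN
      rw [Finset.sum_mul]
      exact Finset.sum_congr rfl fun g _ => by ring
    calc (∑ j : Fin 2, innerN (xpow m j) (CZm m w) * xb j k)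
        = ∑ j : Fin 2, ∑ g : Fin m → Fin 2,
            ((starRingEnd ℂ (xpow m j g) * (-1 : ℂ) ^ pairCount g) * xb j k) * w g :=
          Finset.sum_congr rfl fun j _ => hL j
      _ = ∑ g : Fin m → Fin 2, ∑ j : Fin 2,
            ((starRingEnd ℂ (xpow m j g) * (-1 : ℂ) ^ pairCount g) * xb j k) * w g :=
          Finset.sum_comm
      _ = ∑ g : Fin m → Fin 2, ∑ j : Fin 2,
            (starRingEnd ℂ (ypow m j g) * yb j k) * w g := by
          refine Finset.sum_congr rfl fun g _ => ?_
          rw [← Finset.sum_mul, ← Finset.sum_mul, keyXY hm g k]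
      _ = ∑ j : Fin 2, ∑ g : Fin m → Fin 2,
            (starRingEnd ℂ (ypow m j g) * yb j k) * w g := Finset.sum_comm
      _ = ∑ j : Fin 2, innerN (ypow m j) w * yb j k :=
          Finset.sum_congr rfl fun j _ => (hR j).symm
  · intro f
    funext k
    have hinner : ∀ j : Fin 2, innerN (xpow m j) (CZm m (indN f))
        = starRingEnd ℂ (xpow m j f) * (-1 : ℂ) ^ pairCount f := by
      intro j
      unfold innerN CZm indN
      rw [Finset.sum_eq_single f]
      · simp
      · intro g _ hg
        simp [hg]
      · intro h
        exact absurd (Finset.mem_univ f) h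
    show (∑ j : Fin 2, innerN (xpow m j) (CZm m (indN f)) * xb j k) = _
    calc (∑ j : Fin 2, innerN (xpow m j) (CZm m (indN f)) * xb j k)
        = ∑ j : Fin 2, (starRingEnd ℂ (xpow m j f) * (-1 : ℂ) ^ pairCount f) * xb j k :=
          Finset.sum_congr rfl fun j _ => by rw [hinner j]
      _ = (s2⁻¹ ^ (m - 1) * (-1 : ℂ) ^ (c1 f / 2)) * ket (Fin.ofNat 2 (c1 f : ℕ)) k :=
          keyX hm f k
      _ = ((s2⁻¹ ^ (m - 1) * (-1 : ℂ) ^ (c1 f / 2)) • ket (Fin.ofNat 2 (c1 f : ℕ))) k := by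
          simp
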